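/- In an almost balanced population P (n odd), suppose x_i has a zero-bit in the cold position and a one-bit in the hot position, and let x̃_i be the bit string differing from x_i exactly in the hot and cold positions. Then replacing x_i by x̃_i yields a population in which every position has exactly (n+1)/2 one-bits, i.e., the total Hamming distance becomes the maximum n((n+1)/2)^2. -/

import Mathlib

/-!
Counting disagreements column by column, the total Hamming distance of a population of `m`
strings equals `∑ₖ cₖ (m - cₖ)`, where `cₖ` is the number of ones at position `k`. Replacing
`xᵢ` by `x̃ᵢ` moves one one-bit from the hot to the cold position, so afterwards every
`cₖ = (n + 1) / 2 = m / 2` and each position contributes `((n + 1) / 2) ^ 2`.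
-/

/-- Hamming distance between two bit strings. -/
def hamming {n : ℕ} (x y : Fin n → Bool) : ℕ :=
  (Finset.univ.filter (fun k => x k ≠ y k)).card

/-- Total Hamming distance of a population: sum over all pairs i < j. -/
def totalHamming {m n : ℕ} (P : Fin m → Fin n → Bool) : ℕ :=
  ∑ p ∈ Finset.univ.filter (fun p : Fin m × Fin m => p.1 < p.2), hamming (P p.1) (P p.2)

/-- Number of one-bits of a bit string. -/
def onesCount {n : ℕ} (x : Fin n → Bool) : ℕ :=
  (Finset.univ.filter (fun k => x k = true)).card

/-- Number of individuals with a one-bit at position k. -/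
def colCount {m n : ℕ} (P : Fin m → Fin n → Bool) (k : Fin n) : ℕ :=
  (Finset.univ.filter (fun i => P i k = true)).card

open Finset

lemma card_lt_ne_eq_mul {α : Type*} [Fintype α] [LinearOrder α] (f : α → Bool) :
    #{p : α × α | p.1 < p.2 ∧ f p.1 ≠ f p.2} = #{a | f a = true} * #{a | f a = false} := by
  rw [← card_product, ← filter_product]
  -- an ordered pair with different bits goes to (position of its one, position of its zero)
  refine card_nbij' (fun p => if f p.1 then p else p.swap) (fun q => (min q.1 q.2, max q.1 q.2))
    ?_ ?_ ?_ ?_ <;>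
  · rintro ⟨a, b⟩ h
    simp only [coe_filter, mem_univ, true_and, Set.mem_ofPred_eq] at h ⊢
    grind

lemma totalHamming_eq_sum_colCount {m n : ℕ} (P : Fin m → Fin n → Bool) :
    totalHamming P = ∑ k, colCount P k * (m - colCount P k) := by
  have hzeros : ∀ k, #{a | P a k = false} = m - colCount P k := by
    intro k
    have hsplit := card_filter_add_card_filter_not (s := univ) (p := fun a => P a k = true)
    simp only [card_univ, Fintype.card_fin, Bool.not_eq_true] at hsplit
    rw [colCount]; omega
  calc totalHamming P
      = ∑ p ∈ univ.filter (fun p : Fin m × Fin m => p.1 < p.2),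
          ∑ k, if P p.1 k ≠ P p.2 k then 1 else 0 := by
        simp only [totalHamming, hamming, card_filter]
    _ = ∑ k, #{p : Fin m × Fin m | p.1 < p.2 ∧ P p.1 k ≠ P p.2 k} := by
        rw [sum_comm]
        refine sum_congr rfl fun k _ => ?_
        rw [← filter_filter, card_filter]
    _ = _ := sum_congr rfl fun k _ => by rw [card_lt_ne_eq_mul (P · k), hzeros]; rfl

lemma totalHamming_of_colCount_eq {m n c : ℕ} {P : Fin m → Fin n → Bool}
    (h : ∀ k, colCount P k = c) : totalHamming P = n * (c * (m - c)) := by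
  simp [totalHamming_eq_sum_colCount, h]

lemma colCount_update_add {m n : ℕ} (P : Fin m → Fin n → Bool) (i : Fin m) (y : Fin n → Bool)
    (k : Fin n) :
    colCount (Function.update P i y) k + (P i k).toNat = colCount P k + (y k).toNat := by
  have hsum : ∀ Q : Fin m → Fin n → Bool, colCount Q k = ∑ j, (Q j k).toNat := by
    intro Q; rw [colCount, card_filter]; congr! with j; cases Q j k <;> rfl
  rw [hsum, hsum, ← add_sum_erase _ _ (mem_univ i), ← add_sum_erase _ _ (mem_univ i),
    Function.update_self,
    sum_congr rfl fun j hj => by rw [Function.update_of_ne (ne_of_mem_erase hj)]]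
  ring

theorem stmt16_general (n : ℕ) (hn : Odd n) (x : Fin (n + 1) → Fin n → Bool)
    (hot cold : Fin n)
    (hhot : colCount x hot = (n + 3) / 2) (hcold : colCount x cold = (n - 1) / 2)
    (hbal : ∀ k : Fin n, k ≠ hot → k ≠ cold → colCount x k = (n + 1) / 2)
    (i : Fin (n + 1)) (hic : x i cold = false) (hih : x i hot = true)
    (xt : Fin n → Bool)
    (hxt : xt = fun k => if k = hot ∨ k = cold then !(x i k) else x i k) :
    (∀ k : Fin n, colCount (Function.update x i xt) k = (n + 1) / 2) ∧
      totalHamming (Function.update x i xt) = n * ((n + 1) / 2) ^ 2 := by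
  have hcol (k : Fin n) : colCount (Function.update x i xt) k = (n + 1) / 2 := by
    have hk := colCount_update_add x i xt k
    by_cases hk_hot : k = hot
    · subst hk_hot
      have hxt_hot : xt k = false := by simp [hxt, hih]
      rw [hih, hxt_hot, hhot, Bool.toNat_true, Bool.toNat_false] at hk
      omega
    by_cases hk_cold : k = cold
    · subst hk_cold
      have hxt_cold : xt k = true := by simp [hxt, hic]
      rw [hic, hxt_cold, hcold, Bool.toNat_true, Bool.toNat_false] at hk
      have hn_pos := k.pos
      omega
    · have hxt_k : xt k = x i k := by simp [hxt, hk_hot, hk_cold]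
      rw [hxt_k, hbal k hk_hot hk_cold] at hk
      omega
  refine ⟨hcol, ?_⟩
  obtain ⟨t, rfl⟩ := hn
  rw [totalHamming_of_colCount_eq hcol]
  have hhalf : (2 * t + 1 + 1) / 2 = t + 1 := by omega
  rw [hhalf, show 2 * t + 1 + 1 - (t + 1) = t + 1 by omega]
  ring

theorem stmt16 (n : ℕ) (hn : Odd n) (x : Fin (n + 1) → Fin n → Bool)
    (hlevels : ∀ j : Fin (n + 1), onesCount (x j) = j)
    (hot cold : Fin n) (hne : hot ≠ cold)
    (hhot : colCount x hot = (n + 3) / 2) (hcold : colCount x cold = (n - 1) / 2)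
    (hbal : ∀ k : Fin n, k ≠ hot → k ≠ cold → colCount x k = (n + 1) / 2)
    (i : Fin (n + 1)) (hic : x i cold = false) (hih : x i hot = true)
    (xt : Fin n → Bool)
    (hxt : xt = fun k => if k = hot ∨ k = cold then !(x i k) else x i k) :
    (∀ k : Fin n, colCount (Function.update x i xt) k = (n + 1) / 2) ∧
      totalHamming (Function.update x i xt) = n * ((n + 1) / 2) ^ 2 :=
  stmt16_general n hn x hot cold hhot hcold hbal i hic hih xt hxt
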